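/- For every LTL formula Φ in the syntactic class TL_G, there exists a deterministic ω-automaton A over the alphabet 2^V with a safety acceptance condition (given by a set F of states, a run is accepting iff it stays in F at all times) such that A has at most 2^(2^|Φ|) states and A accepts exactly the set of infinite words w with w ⊨ Φ. -/

import Mathlib

/-- LTL formulas over atomic propositions `V`: the constant `true`, variables,
negation, disjunction, next (`X`), and strong until (`SU`). -/
inductive LTL (V : Type) : Type
  | tt : LTL V
  | var : V → LTL V
  | lnot : LTL V → LTL V
  | lor : LTL V → LTL V → LTL V
  | lnext : LTL V → LTL V
  | lsu : LTL V → LTL V → LTL V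

namespace LTL

variable {V : Type}

/-- Semantics: `Sat w φ i` means `w, i ⊨ φ` for an infinite word `w : ℕ → Set V`.
In particular `w, i ⊨ ψ SU φ` iff there is `k ≥ i` with `w, k ⊨ ψ` and
`w, j ⊨ φ` for all `i ≤ j < k`. -/
def Sat (w : ℕ → Set V) : LTL V → ℕ → Prop
  | tt, _ => True
  | var v, i => v ∈ w i
  | lnot φ, i => ¬ Sat w φ i
  | lor φ ψ, i => Sat w φ i ∨ Sat w ψ i
  | lnext φ, i => Sat w φ (i + 1)
  | lsu ψ φ, i => ∃ k, i ≤ k ∧ Sat w ψ k ∧ ∀ j, i ≤ j → j < k → Sat w φ j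

/-- Conjunction, as the abbreviation `¬(¬φ ∨ ¬ψ)`. -/
def land (φ ψ : LTL V) : LTL V := lnot (lor (lnot φ) (lnot ψ))

/-- `F φ := φ SU true`. -/
def lF (φ : LTL V) : LTL V := lsu φ tt

/-- `G φ := ¬ F ¬ φ`. -/
def lG (φ : LTL V) : LTL V := lnot (lF (lnot φ))

/-- Weak until: `ψ U φ := (ψ SU φ) ∨ G φ`. -/
def lwu (ψ φ : LTL V) : LTL V := lor (lsu ψ φ) (lG φ)

/-- Number of nodes of the syntax tree. -/
def size : LTL V → ℕ
  | tt => 1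
  | var _ => 1
  | lnot φ => size φ + 1
  | lor φ ψ => size φ + size ψ + 1
  | lnext φ => size φ + 1
  | lsu ψ φ => size ψ + size φ + 1

mutual
  /-- The syntactic class `TL_G`. -/
  inductive TLG : LTL V → Prop
    | var (v : V) : TLG (LTL.var v)
    | not {φ : LTL V} : TLF φ → TLG (LTL.lnot φ)
    | and {φ ψ : LTL V} : TLG φ → TLG ψ → TLG (LTL.land φ ψ)
    | or {φ ψ : LTL V} : TLG φ → TLG ψ → TLG (LTL.lor φ ψ)
    | next {φ : LTL V} : TLG φ → TLG (LTL.lnext φ)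
    | alw {φ : LTL V} : TLG φ → TLG (LTL.lG φ)
    | wu {ψ φ : LTL V} : TLG ψ → TLG φ → TLG (LTL.lwu ψ φ)
  /-- The syntactic class `TL_F`. -/
  inductive TLF : LTL V → Prop
    | var (v : V) : TLF (LTL.var v)
    | not {φ : LTL V} : TLG φ → TLF (LTL.lnot φ)
    | and {φ ψ : LTL V} : TLF φ → TLF ψ → TLF (LTL.land φ ψ)
    | or {φ ψ : LTL V} : TLF φ → TLF ψ → TLF (LTL.lor φ ψ)
    | next {φ : LTL V} : TLF φ → TLF (LTL.lnext φ)
    | ev {φ : LTL V} : TLF φ → TLF (LTL.lF φ)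
    | su {ψ φ : LTL V} : TLF ψ → TLF φ → TLF (LTL.lsu ψ φ)
end

end LTL

/-- The unique run of a deterministic automaton with transition function `δ`
and initial state `s0` on the infinite word `w`. -/
def detRun {S A : Type} (δ : S → A → S) (s0 : S) (w : ℕ → A) : ℕ → S
  | 0 => s0
  | t + 1 => δ (detRun δ s0 w t) (w t)


/-!
A `TL_G` formula defines a safety property: if a word falsifies it, some finite prefix already
does, in that every word extending the prefix falsifies it as well (dually, a `TL_F` formula is
made true by a finite prefix; the two facts are proved by simultaneous induction). Hence
`w ⊨ Φ` iff every prefix of `w` extends to a model of `Φ`, and the automaton only has to decide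
extendability of prefixes.

Call a set of subformulas of `Φ` a valuation. After `t` letters the state is the set of
valuations of position `t` under which `Φ` holds at position `0`. The one-step expansion of LTL
computes the truths at `t` from the letter `w t` and the truths at `t + 1`, so each state is a
preimage of the previous one. The prefix is extendable iff the state contains the valuation of
some word, and there are `2 ^ 2 ^ #subformulas ≤ 2 ^ 2 ^ |Φ|` states.
-/

open Set

/-- Truth of `P` is witnessed by a finite prefix: `P` is open in the product topology on words,
and `P` is a safety property iff `¬ P` is cosafe. -/
def IsCosafety {A : Type} (P : (ℕ → A) → Prop) : Prop :=
  ∀ w, P w → ∃ n, ∀ u, EqOn u w (Iio n) → P u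

theorem isCosafety_exists {A ι : Type} {P : ι → (ℕ → A) → Prop}
    (h : ∀ k, IsCosafety (P k)) :
    IsCosafety fun w => ∃ k, P k w := by
  rintro w ⟨k, hk⟩
  obtain ⟨n, hn⟩ := h k w hk
  exact ⟨n, fun u hu => ⟨k, hn u hu⟩⟩

namespace IsCosafety

variable {A : Type} {P Q : (ℕ → A) → Prop}

theorem const (p : Prop) : IsCosafety fun _ : ℕ → A => p :=
  fun _ hp => ⟨0, fun _ _ => hp⟩

theorem letter (Q : A → Prop) (i : ℕ) : IsCosafety fun w : ℕ → A => Q (w i) :=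
  fun _ h => ⟨i + 1, fun _ hu => by
    beta_reduce at h ⊢
    rwa [hu (mem_Iio.2 (Nat.lt_succ_self i))]⟩

protected theorem and (hP : IsCosafety P) (hQ : IsCosafety Q) :
    IsCosafety fun w => P w ∧ Q w := by
  rintro w ⟨hPw, hQw⟩
  obtain ⟨m, hm⟩ := hP w hPw
  obtain ⟨n, hn⟩ := hQ w hQw
  exact ⟨max m n, fun u hu => ⟨hm u (hu.mono (Iio_subset_Iio (le_max_left m n))),
    hn u (hu.mono (Iio_subset_Iio (le_max_right m n)))⟩⟩

protected theorem or (hP : IsCosafety P) (hQ : IsCosafety Q) :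
    IsCosafety fun w => P w ∨ Q w := by
  rintro w (hPw | hQw)
  · obtain ⟨n, hn⟩ := hP w hPw
    exact ⟨n, fun u hu => .inl (hn u hu)⟩
  · obtain ⟨n, hn⟩ := hQ w hQw
    exact ⟨n, fun u hu => .inr (hn u hu)⟩

theorem forall_mem_finset {ι : Type} (s : Finset ι) {P : ι → (ℕ → A) → Prop}
    (h : ∀ j ∈ s, IsCosafety (P j)) : IsCosafety fun w => ∀ j ∈ s, P j w := by
  induction s using Finset.cons_induction with
  | empty => simpa using const (A := A) True
  | cons _ _ _ ih =>
    simp only [Finset.forall_mem_cons] at h ⊢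
    exact h.1.and (ih h.2)

theorem iff_forall_extendable (hP : IsCosafety fun w => ¬ Q w) (w : ℕ → A) :
    Q w ↔ ∀ n, ∃ u, EqOn u w (Iio n) ∧ Q u := by
  refine ⟨fun hw n => ⟨w, eqOn_refl _ _, hw⟩, fun h => by_contra fun hw => ?_⟩
  obtain ⟨n, hn⟩ := hP w hw
  obtain ⟨u, hu, hQu⟩ := h n
  exact hn u hu hQu

end IsCosafety

theorem detRun_eq_of_eqOn {S A : Type} (δ : S → A → S) (s0 : S) {w u : ℕ → A} {n : ℕ}
    (h : EqOn u w (Iio n)) : detRun δ s0 u n = detRun δ s0 w n := by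
  induction n with
  | zero => rfl
  | succ n ih =>
    rw [detRun, detRun, ih (h.mono (Iio_subset_Iio n.le_succ)), h (mem_Iio.2 n.lt_succ_self)]

namespace LTL

variable {V : Type}

theorem sat_land (w : ℕ → Set V) (φ ψ : LTL V) (i : ℕ) :
    Sat w (land φ ψ) i ↔ Sat w φ i ∧ Sat w ψ i := by
  simp [land, Sat]

theorem sat_lF (w : ℕ → Set V) (φ : LTL V) (i : ℕ) :
    Sat w (lF φ) i ↔ ∃ k, i ≤ k ∧ Sat w φ k := by
  simp [lF, Sat]

theorem not_sat_lG (w : ℕ → Set V) (φ : LTL V) (i : ℕ) :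
    ¬ Sat w (lG φ) i ↔ ∃ k, i ≤ k ∧ ¬ Sat w φ k := by
  rw [lG, Sat, not_not, sat_lF]
  rfl

theorem not_sat_lwu (w : ℕ → Set V) (ψ φ : LTL V) (i : ℕ) :
    ¬ Sat w (lwu ψ φ) i ↔
      ∃ k, i ≤ k ∧ ¬ Sat w φ k ∧ ∀ j ∈ Finset.Icc i k, ¬ Sat w ψ j := by
  rw [lwu, Sat, not_or, not_sat_lG]
  constructor
  · rintro ⟨hsu, hG⟩
    classical
    obtain ⟨hik, hφk⟩ := Nat.find_spec hG
    refine ⟨Nat.find hG, hik, hφk, fun j hj hψj => ?_⟩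
    refine hsu ⟨j, (Finset.mem_Icc.1 hj).1, hψj, fun l hil hlj => ?_⟩
    by_contra hφl
    exact Nat.find_min hG (hlj.trans_le (Finset.mem_Icc.1 hj).2) ⟨hil, hφl⟩
  · rintro ⟨k, hik, hφk, hψ⟩
    refine ⟨fun ⟨l, hil, hψl, hφ⟩ => ?_, k, hik, hφk⟩
    rcases le_or_gt l k with hlk | hkl
    · exact hψ l (Finset.mem_Icc.2 ⟨hil, hlk⟩) hψl
    · exact hφk (hφ k hik hkl)

theorem sat_lsu_iff (w : ℕ → Set V) (ψ φ : LTL V) (i : ℕ) :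
    Sat w (lsu ψ φ) i ↔ Sat w ψ i ∨ Sat w φ i ∧ Sat w (lsu ψ φ) (i + 1) := by
  constructor
  · rintro ⟨k, hik, hψk, hφ⟩
    rcases hik.eq_or_lt with rfl | hik
    · exact .inl hψk
    · exact .inr ⟨hφ i le_rfl hik, k, hik, hψk, fun j hij hjk => hφ j (by omega) hjk⟩
  · rintro (hψi | ⟨hφi, k, hik, hψk, hφ⟩)
    · exact ⟨i, le_rfl, hψi, fun j hij hji => absurd hji (not_lt.2 hij)⟩
    · refine ⟨k, by omega, hψk, fun j hij hjk => ?_⟩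
      rcases hij.eq_or_lt with rfl | hij
      · exact hφi
      · exact hφ j hij hjk

mutual

theorem TLG.isCosafety_not_sat :
    ∀ {Φ : LTL V}, TLG Φ → ∀ i, IsCosafety fun w : ℕ → Set V => ¬ Sat w Φ i
  | _, .var v, i => IsCosafety.letter (fun σ => v ∉ σ) i
  | _, .not h, i => by simpa only [Sat, not_not] using h.isCosafety_sat i
  | _, .and h₁ h₂, i => by
    simpa only [sat_land, not_and_or] using
      (h₁.isCosafety_not_sat i).or (h₂.isCosafety_not_sat i)
  | _, .or h₁ h₂, i => by
    simpa only [Sat, not_or] using (h₁.isCosafety_not_sat i).and (h₂.isCosafety_not_sat i)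
  | _, .next h, i => h.isCosafety_not_sat (i + 1)
  | _, .alw h, i => by
    simpa only [not_sat_lG] using
      isCosafety_exists fun k => (IsCosafety.const _).and (h.isCosafety_not_sat k)
  | _, .wu h₁ h₂, i => by
    simpa only [not_sat_lwu] using isCosafety_exists fun k => (IsCosafety.const _).and
      ((h₂.isCosafety_not_sat k).and
        (IsCosafety.forall_mem_finset _ fun j _ => h₁.isCosafety_not_sat j))

theorem TLF.isCosafety_sat :
    ∀ {Φ : LTL V}, TLF Φ → ∀ i, IsCosafety fun w : ℕ → Set V => Sat w Φ i
  | _, .var v, i => IsCosafety.letter (fun σ => v ∈ σ) i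
  | _, .not h, i => h.isCosafety_not_sat i
  | _, .and h₁ h₂, i => by
    simpa only [sat_land] using (h₁.isCosafety_sat i).and (h₂.isCosafety_sat i)
  | _, .or h₁ h₂, i => (h₁.isCosafety_sat i).or (h₂.isCosafety_sat i)
  | _, .next h, i => h.isCosafety_sat (i + 1)
  | _, .ev h, i => by
    simpa only [sat_lF] using
      isCosafety_exists fun k => (IsCosafety.const _).and (h.isCosafety_sat k)
  | _, .su h₁ h₂, i => by
    simpa only [Sat, Finset.mem_Ico, and_imp] using
      isCosafety_exists fun k => (IsCosafety.const (i ≤ k)).and ((h₁.isCosafety_sat k).and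
        (IsCosafety.forall_mem_finset (Finset.Ico i k) fun j _ => h₂.isCosafety_sat j))

end

theorem sat_add_iff {u v : ℕ → Set V} {n : ℕ} (h : ∀ i, v (n + i) = u i)
    (φ : LTL V) (k : ℕ) :
    Sat v φ (n + k) ↔ Sat u φ k := by
  induction φ generalizing k with
  | tt => rfl
  | var x => simp only [Sat, h]
  | lnot φ ih => simp only [Sat, ih]
  | lor φ ψ ih₁ ih₂ => simp only [Sat, ih₁, ih₂]
  | lnext φ ih => exact ih (k + 1)
  | lsu ψ φ ih₁ ih₂ =>
    constructor
    · rintro ⟨m, hm, hψ, hφ⟩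
      obtain ⟨m, rfl⟩ := Nat.exists_eq_add_of_le ((Nat.le_add_right n k).trans hm)
      refine ⟨m, by omega, (ih₁ m).1 hψ, fun j hkj hjm => ?_⟩
      exact (ih₂ j).1 (hφ (n + j) (by omega) (by omega))
    · rintro ⟨m, hm, hψ, hφ⟩
      refine ⟨n + m, by omega, (ih₁ m).2 hψ, fun j hkj hjm => ?_⟩
      obtain ⟨j, rfl⟩ := Nat.exists_eq_add_of_le ((Nat.le_add_right n k).trans hkj)
      exact (ih₂ j).2 (hφ j (by omega) (by omega))

section Automaton

open scoped Classical

noncomputable def subformulas : LTL V → Finset (LTL V)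
  | tt => {tt}
  | var v => {var v}
  | lnot φ => insert (lnot φ) (subformulas φ)
  | lor φ ψ => insert (lor φ ψ) (subformulas φ ∪ subformulas ψ)
  | lnext φ => insert (lnext φ) (subformulas φ)
  | lsu ψ φ => insert (lsu ψ φ) (subformulas ψ ∪ subformulas φ)

theorem mem_subformulas_self (φ : LTL V) : φ ∈ subformulas φ := by
  cases φ <;> simp [subformulas]

theorem card_subformulas_le (φ : LTL V) : (subformulas φ).card ≤ size φ := by
  induction φ with
  | tt | var => simp [subformulas, size]
  | lnot φ ih | lnext φ ih => grind [subformulas, size, Finset.card_insert_le]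
  | lor φ ψ ih₁ ih₂ | lsu φ ψ ih₁ ih₂ =>
    grind [subformulas, size, Finset.card_insert_le, Finset.card_union_le]

theorem subformulas_subset_of_mem {χ φ : LTL V} (h : χ ∈ subformulas φ) :
    subformulas χ ⊆ subformulas φ := by
  induction φ with
  | tt | var => simp_all [subformulas]
  | lnot φ ih | lnext φ ih =>
    rw [subformulas, Finset.mem_insert] at h
    rcases h with rfl | h
    · exact subset_rfl
    · exact (ih h).trans (Finset.subset_insert _ _)
  | lor φ ψ ih₁ ih₂ | lsu φ ψ ih₁ ih₂ =>
    rw [subformulas, Finset.mem_insert, Finset.mem_union] at h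
    rcases h with rfl | h | h
    · exact subset_rfl
    · exact (ih₁ h).trans (Finset.subset_union_left.trans (Finset.subset_insert _ _))
    · exact (ih₂ h).trans (Finset.subset_union_right.trans (Finset.subset_insert _ _))

/-- Evaluates a formula at a position carrying the letter `σ`, given the set `next` of formulas
true at the following position; the `lsu` clause is the expansion law `sat_lsu_iff`. -/
def step (σ : Set V) (next : Set (LTL V)) : LTL V → Prop
  | tt => True
  | var v => v ∈ σ
  | lnot φ => ¬ step σ next φ
  | lor φ ψ => step σ next φ ∨ step σ next ψ
  | lnext φ => φ ∈ next
  | lsu ψ φ => step σ next ψ ∨ (step σ next φ ∧ lsu ψ φ ∈ next)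

theorem step_iff_sat {w : ℕ → Set V} {t : ℕ} {next : Set (LTL V)} (ψ : LTL V)
    (hnext : ∀ χ ∈ subformulas ψ, χ ∈ next ↔ Sat w χ (t + 1)) :
    step (w t) next ψ ↔ Sat w ψ t := by
  induction ψ with
  | tt | var => rfl
  | lnot φ ih =>
    simp only [step, Sat, ih fun χ hχ => hnext χ (by simp [subformulas, hχ])]
  | lor φ ψ ih₁ ih₂ =>
    simp only [step, Sat, ih₁ fun χ hχ => hnext χ (by simp [subformulas, hχ]),
      ih₂ fun χ hχ => hnext χ (by simp [subformulas, hχ])]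
  | lnext φ => exact hnext φ (by simp [subformulas, mem_subformulas_self])
  | lsu ψ φ ih₁ ih₂ =>
    simp only [step, ih₁ fun χ hχ => hnext χ (by simp [subformulas, hχ]),
      ih₂ fun χ hχ => hnext χ (by simp [subformulas, hχ]),
      hnext _ (mem_subformulas_self _), ← sat_lsu_iff]

def truths (Φ : LTL V) (w : ℕ → Set V) (t : ℕ) : Set (subformulas Φ) :=
  {χ | Sat w χ t}

theorem truths_eq_of_shift (Φ : LTL V) {u v : ℕ → Set V} {n : ℕ}
    (h : ∀ i, v (n + i) = u i) :
    truths Φ v n = truths Φ u 0 := by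
  ext χ
  exact sat_add_iff h χ 0

def expand (Φ : LTL V) (σ : Set V) (a : Set (subformulas Φ)) : Set (subformulas Φ) :=
  {χ | step σ (Subtype.val '' a) χ}

theorem expand_truths (Φ : LTL V) (w : ℕ → Set V) (t : ℕ) :
    expand Φ (w t) (truths Φ w (t + 1)) = truths Φ w t := by
  ext ⟨χ, hχ⟩
  refine step_iff_sat χ fun ψ hψ => ?_
  simp [truths, subformulas_subset_of_mem hχ hψ]

def initState (Φ : LTL V) : Set (Set (subformulas Φ)) :=
  {a | ⟨Φ, mem_subformulas_self Φ⟩ ∈ a}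

def nextState (Φ : LTL V) (B : Set (Set (subformulas Φ))) (σ : Set V) :
    Set (Set (subformulas Φ)) :=
  expand Φ σ ⁻¹' B

def live (Φ : LTL V) : Set (Set (Set (subformulas Φ))) :=
  {B | ∃ u, truths Φ u 0 ∈ B}

theorem truths_mem_detRun_iff (Φ : LTL V) (w : ℕ → Set V) (t : ℕ) :
    truths Φ w t ∈ detRun (nextState Φ) (initState Φ) w t ↔ Sat w Φ 0 := by
  induction t with
  | zero => rfl
  | succ t ih => rw [detRun, nextState, mem_preimage, expand_truths, ih]

theorem forall_detRun_mem_live_iff (Φ : LTL V) (w : ℕ → Set V) :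
    (∀ t, detRun (nextState Φ) (initState Φ) w t ∈ live Φ) ↔
      ∀ n, ∃ u, EqOn u w (Iio n) ∧ Sat u Φ 0 := by
  refine forall_congr' fun n => ⟨?_, ?_⟩
  · rintro ⟨u, hu⟩
    let v : ℕ → Set V := fun i => if i < n then w i else u (i - n)
    have hvw : EqOn v w (Iio n) := fun i hi => if_pos hi
    have hvu : ∀ i, v (n + i) = u i := fun i => by simp [v]
    refine ⟨v, hvw, (truths_mem_detRun_iff Φ v n).1 ?_⟩
    rwa [truths_eq_of_shift Φ hvu, detRun_eq_of_eqOn _ _ hvw]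
  · rintro ⟨u, huw, hu⟩
    refine ⟨fun i => u (n + i), ?_⟩
    rw [← truths_eq_of_shift Φ fun _ => rfl, ← detRun_eq_of_eqOn _ _ huw]
    exact (truths_mem_detRun_iff Φ u n).2 hu

end Automaton

end LTL

/-- every `TL_G` formula `Φ` is recognized by a deterministic
ω-automaton with a safety acceptance condition and at most `2 ^ 2 ^ |Φ|` states. -/
theorem tlG_deterministic_safety_automaton
    {V : Type} [Fintype V] (Φ : LTL V) (hΦ : LTL.TLG Φ) :
    ∃ (S : Type) (_ : Fintype S) (s0 : S) (δ : S → Set V → S) (F : Set S),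
      Fintype.card S ≤ 2 ^ (2 ^ LTL.size Φ) ∧
      ∀ w : ℕ → Set V, ((∀ t, detRun δ s0 w t ∈ F) ↔ LTL.Sat w Φ 0) := by
  refine ⟨_, inferInstance, LTL.initState Φ, LTL.nextState Φ, LTL.live Φ, ?_, fun w => ?_⟩
  · rw [Fintype.card_set, Fintype.card_set, Fintype.card_coe]
    exact Nat.pow_le_pow_right two_pos (Nat.pow_le_pow_right two_pos (LTL.card_subformulas_le Φ))
  · rw [LTL.forall_detRun_mem_live_iff, (hΦ.isCosafety_not_sat 0).iff_forall_extendable w]
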